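/- Suppose G is connected and balanced with partition V₁, V₂, and x ∈ ℝⁿ is nonzero with x₁ > 0, 1 ∈ V₁. Let x̃ᵢ = |xᵢ| for i ∈ V₁ and x̃ᵢ = -|xᵢ| for i ∈ V₂. If x ≠ x̃ (i.e., some coordinate changes sign under this map) then E(x̃) < E(x) strictly, for any κ > 0. -/

import Mathlib

/-!
Flipping coordinates to the sign pattern `x̃` of the bipartition preserves every `|xᵢ|`, hence
the potential term `∑ W (xᵢ)` (as `W` is even) and the squares in `(xᵢ - xⱼ)²`; only the cross
terms change, and on a balanced graph `γᵢⱼ x̃ᵢ x̃ⱼ = |γᵢⱼ xᵢ xⱼ|`, so no edge term of the energy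
increases. Along a path from a vertex where `x = x̃` to one where `x ≠ x̃` there is an edge
`(a, b)` with `xₐ = x̃ₐ` and `x_b = -x̃_b`; there `γ_ab xₐ x_b < 0` and the edge term drops strictly.
-/

open Finset

theorem Relation.ReflTransGen.exists_rel_leaving {α : Type*} {r : α → α → Prop} {P : α → Prop}
    {a b : α} (h : Relation.ReflTransGen r a b) (ha : P a) (hb : ¬ P b) :
    ∃ c d, r c d ∧ P c ∧ ¬ P d := by
  induction h with
  | refl => exact absurd ha hb
  | @tail c d _ hcd ih =>
    by_cases hc : P c
    · exact ⟨c, d, hcd, hc, hb⟩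
    · exact ih hc

theorem Function.Even.comp_abs {f : ℝ → ℝ} (hf : Function.Even f) (t : ℝ) : f |t| = f t := by
  rcases abs_choice t with h | h <;> rw [h]
  exact hf t

section SignedGraph

variable {ι : Type*} (σ : ι → Bool) (γ : ι → ι → ℝ)

def IsBalanced : Prop :=
  ∀ i j, (σ i = σ j → 0 ≤ γ i j) ∧ (σ i ≠ σ j → γ i j ≤ 0)

def signAdjust (x : ι → ℝ) (i : ι) : ℝ :=
  if σ i then |x i| else -|x i|

variable {σ γ}

@[simp]
theorem abs_signAdjust (x : ι → ℝ) (i : ι) : |signAdjust σ x i| = |x i| := by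
  unfold signAdjust
  split_ifs <;> simp

theorem signAdjust_eq_or_eq_neg (x : ι → ℝ) (i : ι) :
    x i = signAdjust σ x i ∨ x i = -signAdjust σ x i :=
  abs_eq_abs.mp (abs_signAdjust x i).symm

theorem IsBalanced.mul_signAdjust_mul (hγ : IsBalanced σ γ) (x : ι → ℝ) (i j : ι) :
    γ i j * (signAdjust σ x i * signAdjust σ x j) = |γ i j * (x i * x j)| := by
  simp only [signAdjust, abs_mul]
  by_cases h : σ i = σ j
  · rw [abs_of_nonneg ((hγ i j).1 h), h]
    cases σ j <;> simp only [Bool.false_eq_true, if_true, if_false, neg_mul_neg]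
  · rw [abs_of_nonpos ((hγ i j).2 h), Bool.eq_not_of_ne h]
    cases σ j <;>
      simp only [Bool.not_false, Bool.not_true, Bool.false_eq_true, if_true, if_false] <;> ring

theorem IsBalanced.weighted_sq_sub_signAdjust (hγ : IsBalanced σ γ) (x : ι → ℝ) (i j : ι) :
    γ i j * (x i - x j) ^ 2 = γ i j * (signAdjust σ x i - signAdjust σ x j) ^ 2
      + 2 * (|γ i j * (x i * x j)| - γ i j * (x i * x j)) := by
  have hsq : ∀ k, signAdjust σ x k ^ 2 = x k ^ 2 := fun k => by
    rw [← sq_abs, abs_signAdjust, sq_abs]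
  linear_combination (-γ i j) * hsq i - γ i j * hsq j + 2 * hγ.mul_signAdjust_mul x i j

theorem IsBalanced.sum_weighted_sq_sub_signAdjust_lt [Fintype ι] (hγ : IsBalanced σ γ)
    {x : ι → ℝ} {a b : ι} (hab : γ a b * (x a * x b) < 0) :
    ∑ i, ∑ j, γ i j * (signAdjust σ x i - signAdjust σ x j) ^ 2
      < ∑ i, ∑ j, γ i j * (x i - x j) ^ 2 := by
  have hle : ∀ i j,
      γ i j * (signAdjust σ x i - signAdjust σ x j) ^ 2 ≤ γ i j * (x i - x j) ^ 2 := by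
    intro i j
    rw [hγ.weighted_sq_sub_signAdjust x i j]
    linarith [le_abs_self (γ i j * (x i * x j))]
  have hlt : γ a b * (signAdjust σ x a - signAdjust σ x b) ^ 2 < γ a b * (x a - x b) ^ 2 := by
    rw [hγ.weighted_sq_sub_signAdjust x a b, abs_of_neg hab]
    linarith
  exact sum_lt_sum (fun i _ => sum_le_sum fun j _ => hle i j)
    ⟨a, mem_univ a, sum_lt_sum (fun j _ => hle a j) ⟨b, mem_univ b, hlt⟩⟩

theorem IsBalanced.exists_mul_neg_of_signAdjust_ne (hγ : IsBalanced σ γ) {x : ι → ℝ}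
    (hnz : ∀ i, x i ≠ 0) {v k : ι} (hpath : Relation.ReflTransGen (fun a b => γ a b ≠ 0) v k)
    (hv : x v = signAdjust σ x v) (hk : x k ≠ signAdjust σ x k) :
    ∃ a b, γ a b * (x a * x b) < 0 := by
  obtain ⟨a, b, hab, ha, hb⟩ :=
    hpath.exists_rel_leaving (P := fun i => x i = signAdjust σ x i) hv hk
  have hb' : x b = -signAdjust σ x b := (signAdjust_eq_or_eq_neg x b).resolve_left hb
  have hflip : γ a b * (x a * x b) = -|γ a b * (x a * x b)| := by
    rw [← hγ.mul_signAdjust_mul, ← ha, hb']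
    ring
  refine ⟨a, b, ?_⟩
  rw [hflip, neg_lt_zero, abs_pos]
  exact mul_ne_zero hab (mul_ne_zero (hnz a) (hnz b))

end SignedGraph

theorem stmt9_general (n : ℕ) (γ : Fin n → Fin n → ℝ)
    (hconn : ∀ i j : Fin n, Relation.ReflTransGen (fun a b => γ a b ≠ 0) i j)
    (σ : Fin n → Bool)
    (hpart : ∀ i j, (σ i = σ j → 0 ≤ γ i j) ∧ (σ i ≠ σ j → γ i j ≤ 0))
    (W : ℝ → ℝ) (heven : ∀ t, W (-t) = W t)
    (κ : ℝ) (hκ : 0 < κ)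
    (E : (Fin n → ℝ) → ℝ)
    (hE : ∀ x, E x = ∑ i, W (x i) + κ / 2 * ∑ i, ∑ j, γ i j * (x i - x j) ^ 2)
    (x : Fin n → ℝ) (hnz : ∀ i, x i ≠ 0)
    (v : Fin n) (hv : σ v = true) (hxv : 0 < x v)
    (xt : Fin n → ℝ)
    (hxt : ∀ i, xt i = if σ i then |x i| else -|x i|)
    (hne : x ≠ xt) :
    E xt < E x := by
  obtain rfl : xt = signAdjust σ x := funext hxt
  obtain ⟨k, hk⟩ := Function.ne_iff.mp hne
  have hxv' : x v = signAdjust σ x v := by simp [signAdjust, hv, abs_of_pos hxv]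
  obtain ⟨a, b, hab⟩ := IsBalanced.exists_mul_neg_of_signAdjust_ne hpart hnz (hconn v k) hxv' hk
  have hW : ∑ i, W (signAdjust σ x i) = ∑ i, W (x i) := sum_congr rfl fun i _ => by
    rw [← Function.Even.comp_abs heven, abs_signAdjust, Function.Even.comp_abs heven]
  rw [hE, hE, hW]
  exact (add_lt_add_iff_left _).mpr
    (mul_lt_mul_of_pos_left (IsBalanced.sum_weighted_sq_sub_signAdjust_lt hpart hab) (half_pos hκ))

/-- if `G` is connected with balanced partition `σ`, `x` is nonzero
with `x_v > 0` at some vertex `v ∈ V₁`, all coordinates nonzero, and the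
sign-adjusted vector `x̃` differs from `x`, then `E(x̃) < E(x)` for any `κ > 0`. -/
theorem stmt9 (n : ℕ) (γ : Fin n → Fin n → ℝ)
    (hsym : ∀ i j, γ i j = γ j i) (hdiag : ∀ i, γ i i = 0)
    (hconn : ∀ i j : Fin n, Relation.ReflTransGen (fun a b => γ a b ≠ 0) i j)
    (σ : Fin n → Bool)
    (hpart : ∀ i j, (σ i = σ j → 0 ≤ γ i j) ∧ (σ i ≠ σ j → γ i j ≤ 0))
    (W : ℝ → ℝ) (heven : ∀ t, W (-t) = W t)
    (κ : ℝ) (hκ : 0 < κ)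
    (E : (Fin n → ℝ) → ℝ)
    (hE : ∀ x, E x = ∑ i, W (x i) + κ / 2 * ∑ i, ∑ j, γ i j * (x i - x j) ^ 2)
    (x : Fin n → ℝ) (hx : x ≠ 0) (hnz : ∀ i, x i ≠ 0)
    (v : Fin n) (hv : σ v = true) (hxv : 0 < x v)
    (xt : Fin n → ℝ)
    (hxt : ∀ i, xt i = if σ i then |x i| else -|x i|)
    (hne : x ≠ xt) :
    E xt < E x :=
  stmt9_general n γ hconn σ hpart W heven κ hκ E hE x hnz v hv hxv xt hxt hne
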